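/- Model STRIPS plan execution over a finite set of facts, and call an action b an achiever of fact L if L ∈ eff⁺(b). Suppose L ∉ I and suppose that in the modified planning problem obtained by removing all achievers of L from the action set, no applicable action sequence from I reaches a state containing the goal G (the modified problem is unsolvable). Then L is a fact landmark for (I, G): every valid plan from I achieving G contains at least one achiever of L, and hence L holds in some intermediate state of every such plan. -/

import Mathlib

/-- A STRIPS action with preconditions, add effects and delete effects. -/
structure Act (α : Type*) where
  pre : Finset α
  addE : Finset α
  delE : Finset α

variable {α : Type*} [DecidableEq α]

/-- Applying an action to a state: `S' = (S \ eff⁻(a)) ∪ eff⁺(a)`. -/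
def applyAct (S : Finset α) (a : Act α) : Finset α :=
  (S \ a.delE) ∪ a.addE

/-- The induced state sequence `I = S₀, S₁, …, Sₙ` of a plan. -/
def states (I : Finset α) : List (Act α) → List (Finset α)
  | [] => [I]
  | a :: rest => I :: states (applyAct I a) rest

/-- A plan is applicable from a state if each action's preconditions hold
in the state it is applied in. -/
def applicable (I : Finset α) : List (Act α) → Prop
  | [] => True
  | a :: rest => a.pre ⊆ I ∧ applicable (applyAct I a) rest

/-- The final state of executing a plan from `I`. -/
def finalState (I : Finset α) (pl : List (Act α)) : Finset α :=
  pl.foldl applyAct I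

theorem mem_states_self (I : Finset α) (pl : List (Act α)) : I ∈ states I pl := by
  cases pl <;> simp [states]

theorem exists_mem_states_addE_subset (I : Finset α) {pl : List (Act α)} {a : Act α}
    (ha : a ∈ pl) : ∃ S ∈ states I pl, a.addE ⊆ S := by
  induction pl generalizing I with
  | nil => simp at ha
  | cons b rest ih =>
    rcases List.mem_cons.mp ha with rfl | ha
    · exact ⟨applyAct I a, by simp [states, mem_states_self], Finset.subset_union_right⟩
    · obtain ⟨S, hS, haS⟩ := ih (applyAct I b) ha
      exact ⟨S, List.mem_cons_of_mem _ hS, haS⟩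

theorem stmt17_general (A : Set (Act α)) (I G : Finset α) (L : α)
    (hunsolv : ∀ pl : List (Act α),
      (∀ a ∈ pl, a ∈ A ∧ L ∉ a.addE) → applicable I pl →
        ¬ G ⊆ finalState I pl) :
    ∀ pl : List (Act α), (∀ a ∈ pl, a ∈ A) → applicable I pl →
      G ⊆ finalState I pl →
        (∃ a ∈ pl, L ∈ a.addE) ∧ ∃ S ∈ states I pl, L ∈ S := by
  intro pl hA happ hG
  have hachiever : ∃ a ∈ pl, L ∈ a.addE := by
    by_contra! hnone
    exact hunsolv pl (fun a ha => ⟨hA a ha, hnone a ha⟩) happ hG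
  obtain ⟨a, ha, hLa⟩ := hachiever
  obtain ⟨S, hS, haS⟩ := exists_mem_states_addE_subset I ha
  exact ⟨⟨a, ha, hLa⟩, S, hS, haS hLa⟩

/-- Landmark verification: if `L ∉ I` and the problem obtained by removing
all achievers of `L` is unsolvable, then every valid plan from `I` achieving
`G` contains an achiever of `L`, and `L` holds in some state along every
such plan. -/
theorem stmt17 (A : Set (Act α)) (I G : Finset α) (L : α)
    (hLI : L ∉ I)
    (hunsolv : ∀ pl : List (Act α),
      (∀ a ∈ pl, a ∈ A ∧ L ∉ a.addE) → applicable I pl →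
        ¬ G ⊆ finalState I pl) :
    ∀ pl : List (Act α), (∀ a ∈ pl, a ∈ A) → applicable I pl →
      G ⊆ finalState I pl →
        (∃ a ∈ pl, L ∈ a.addE) ∧ ∃ S ∈ states I pl, L ∈ S :=
  stmt17_general A I G L hunsolv
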